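/- arXiv:2605.15194 — 9 statements merged into one kernel-verified Lean document; each statement's English description precedes it below -/
import Mathlib

section
/- Structure theorem for weakly integral fusion rings (the paper's Proposition 2.2, adapted from EGNO Prop. 3.5.7): Let (I, 1, *, N) be a fusion ring with dimension function d, and assume it is weakly integral, i.e. for every x ∈ I the square d(x)² is a positive integer. Then there exist: a finite abelian group E in which every element g satisfies g·g = 1; a surjective map deg : I → E with deg(1) = 1, deg(x*) = deg(x), and such that N^z_{xy} > 0 implies deg(z) = deg(x)·deg(y); an injective function n : E → ℕ taking squarefree positive integer values with n(1) = 1; and positive integers a_x for x ∈ I; such that d(x) = a_x·√(n(deg x)) for every x ∈ I, and moreover for all g, h ∈ E the real number √(n(g)·n(h)/n(g·h)) is a positive integer. -/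
/-!
Write `d x = a x * √(m x)` with `m x` squarefree. Over a finite extension of `ℚ` the trace of a
square root of a non-square vanishes, so a combination `∑ cᵢ √mᵢ` with natural coefficients and
non-square `mᵢ` can only be rational if all `cᵢ` vanish. Applied to
`d x * d y = ∑ z, N x y z * d z`, this forces every constituent `z` of `x ⊗ y` to have `m z` equal
to the squarefree part of `m x * m y`. Hence `x ↦ d x` modulo `ℚˣ` is a grading: its image in
`ℝˣ ⧸ ℚˣ` is a group of exponent two, and the class of `d x` determines `m x`.
-/

theorem Nat.eq_of_squarefree_of_isSquare_mul {m s : ℕ} (hm : Squarefree m) (hs : Squarefree s)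
    (h : IsSquare (m * s)) : m = s := by
  obtain ⟨k, hk⟩ := h
  have hk0 : k ≠ 0 := by rintro rfl; simp [hm.ne_zero, hs.ne_zero] at hk
  refine Nat.eq_of_factorization_eq hm.ne_zero hs.ne_zero fun p => ?_
  have hsum := congrArg (·.factorization p) hk
  simp only [Nat.factorization_mul hm.ne_zero hs.ne_zero, Nat.factorization_mul hk0 hk0,
    Finsupp.add_apply] at hsum
  have := (Nat.squarefree_iff_factorization_le_one hm.ne_zero).mp hm p
  have := (Nat.squarefree_iff_factorization_le_one hs.ne_zero).mp hs p
  omega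

open Polynomial in
theorem Algebra.trace_eq_zero_of_sq_eq_algebraMap {F L : Type*} [Field F] [Field L] [Algebra F L]
    [FiniteDimensional F L] {x : L} {a : F} (hx : x ^ 2 = algebraMap F L a)
    (hxF : x ∉ (algebraMap F L).range) : Algebra.trace F L x = 0 := by
  have hmin : X ^ 2 - C a = minpoly F x := by
    refine minpoly.unique_of_degree_le_degree_minpoly _ _ (monic_X_pow_sub_C a two_ne_zero)
      (by simp [hx]) ?_
    rw [degree_X_pow_sub_C two_pos, degree_eq_natDegree (minpoly.ne_zero_of_finite F x)]
    exact_mod_cast (minpoly.two_le_natDegree_iff (.of_finite F x)).mpr hxF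
  rw [trace_eq_finrank_mul_minpoly_nextCoeff, ← hmin]
  simp [nextCoeff, coeff_X_pow]

theorem eq_zero_of_sum_natCast_mul_sqrt_eq_ratCast {ι : Type*} {s : Finset ι} {m c : ι → ℕ}
    (hm : ∀ i ∈ s, ¬IsSquare (m i)) {q : ℚ} (h : ∑ i ∈ s, (c i : ℝ) * √(m i) = q) :
    ∀ i ∈ s, c i = 0 := by
  let K := IntermediateField.adjoin ℚ ((fun i => √(m i : ℝ)) '' s)
  have hmem : ∀ i ∈ s, √(m i : ℝ) ∈ K := fun i hi =>
    IntermediateField.subset_adjoin _ _ ⟨i, hi, rfl⟩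
  have : FiniteDimensional ℚ K := by
    refine IntermediateField.finiteDimensional_adjoin fun _ ⟨i, _, hi⟩ => hi ▸ ?_
    refine .of_pow two_pos ?_
    rw [Real.sq_sqrt (Nat.cast_nonneg _)]
    exact isIntegral_algebraMap (x := (m i : ℚ))
  have htrace : ∀ i : s, Algebra.trace ℚ K ⟨√(m i), hmem i i.2⟩ = 0 := by
    rintro ⟨i, hi⟩
    refine Algebra.trace_eq_zero_of_sq_eq_algebraMap (a := m i) (Subtype.ext ?_) ?_
    · simp
    · rintro ⟨r, hr⟩
      refine irrational_sqrt_natCast_iff.mpr (hm i hi) ⟨r, ?_⟩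
      simpa using congrArg Subtype.val hr
  let α : K := ∑ i ∈ s.attach, (c i : ℚ) • ⟨√(m i), hmem i i.2⟩
  have hα : α = algebraMap ℚ K q := by
    apply Subtype.ext
    simp [α, ← h, Finset.sum_attach s (fun i => (c i : ℝ) * √(m i)), Algebra.smul_def]
  have hq : q = 0 := by
    have := congrArg (Algebra.trace ℚ K) hα
    simp only [α, map_sum, map_smul, htrace, smul_zero, Finset.sum_const_zero,
      Algebra.trace_algebraMap] at this
    simpa [Module.finrank_pos.ne'] using this.symm
  subst hq
  intro i hi
  have hi0 : (c i : ℝ) * √(m i) = 0 :=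
    (Finset.sum_eq_zero_iff_of_nonneg (fun j _ => by positivity :
      ∀ j ∈ s, 0 ≤ (c j : ℝ) * √(m j))).mp (by simpa using h) i hi
  have hm0 : (m i : ℝ) ≠ 0 := by
    exact_mod_cast fun h0 : m i = 0 => hm i hi (h0 ▸ ⟨0, rfl⟩)
  simpa [hm0] using hi0

theorem eq_of_sum_natCast_mul_sqrt_eq_ratCast_mul_sqrt {ι : Type*} {s : Finset ι}
    {m c : ι → ℕ} {t : ℕ} (hm : ∀ i ∈ s, Squarefree (m i)) (ht : Squarefree t) {r : ℚ}
    (h : ∑ i ∈ s, (c i : ℝ) * √(m i) = r * √t) : ∀ i ∈ s, c i ≠ 0 → m i = t := by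
  have hrat : ∑ i ∈ s with m i ≠ t, (c i : ℝ) * √(m i * t : ℕ) =
      ((r * t - ∑ i ∈ s with m i = t, (c i * t : ℕ) : ℚ) : ℝ) := by
    have hsq : ∀ i, (c i : ℝ) * √(m i) * √t = (c i : ℝ) * √(m i * t : ℕ) := fun i => by
      rw [Nat.cast_mul, Real.sqrt_mul (Nat.cast_nonneg _), mul_assoc]
    have hsame : ∑ i ∈ s with m i = t, (c i : ℝ) * √(m i * t : ℕ) =
        ∑ i ∈ s with m i = t, ((c i * t : ℕ) : ℝ) := Finset.sum_congr rfl fun i hi => by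
      rw [(Finset.mem_filter.mp hi).2, Nat.cast_mul, Nat.cast_mul,
        Real.sqrt_mul_self (Nat.cast_nonneg _)]
    have h' := congrArg (· * √t) h
    simp only [Finset.sum_mul, hsq, mul_assoc, Real.mul_self_sqrt (Nat.cast_nonneg _)] at h'
    rw [← Finset.sum_filter_add_sum_filter_not s (m · = t), hsame] at h'
    push_cast at h' ⊢
    linarith
  intro i hi hc
  by_contra hne
  refine hc (eq_zero_of_sum_natCast_mul_sqrt_eq_ratCast (fun j hj hsq => ?_) hrat i
    (Finset.mem_filter.mpr ⟨hi, hne⟩))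
  obtain ⟨hj, hjt⟩ := Finset.mem_filter.mp hj
  exact hjt (Nat.eq_of_squarefree_of_isSquare_mul (hm j hj) ht hsq)

theorem exists_eq_natCast_mul_sqrt_squarefree {r : ℝ} (hr : 0 < r) {k : ℕ} (hk : r ^ 2 = k) :
    ∃ a m : ℕ, 0 < a ∧ Squarefree m ∧ r = a * √m := by
  have hk0 : 0 < k := by exact_mod_cast hk ▸ pow_pos hr 2
  obtain ⟨m, a, -, ha, rfl, hm⟩ := Nat.sq_mul_squarefree_of_pos hk0
  refine ⟨a, m, ha, hm, ?_⟩
  rw [← Real.sqrt_sq hr.le, hk, Nat.cast_mul, Nat.cast_pow,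
    Real.sqrt_mul (by positivity), Real.sqrt_sq (Nat.cast_nonneg _)]

theorem eq_one_of_natCast_mul_sqrt_eq_one {a m : ℕ} (h : (a : ℝ) * √m = 1) : m = 1 := by
  have h2 : ((a ^ 2 * m : ℕ) : ℝ) = 1 := by
    rw [Nat.cast_mul, Nat.cast_pow, ← Real.sq_sqrt (Nat.cast_nonneg m), ← mul_pow, h, one_pow]
  exact Nat.eq_one_of_mul_eq_one_left (by exact_mod_cast h2)

theorem sqrt_mul_div_eq_of_mul_eq_sq_mul {p q r t : ℕ} (hr : r ≠ 0) (h : p * q = t ^ 2 * r) :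
    √((p : ℝ) * q / r) = t := by
  rw [← Nat.cast_mul, h, Nat.cast_mul, mul_div_cancel_right₀ _ (Nat.cast_ne_zero.mpr hr),
    Nat.cast_pow, Real.sqrt_sq (Nat.cast_nonneg _)]

theorem Subgroup.mem_closure_range_iff_of_mul_self {G ι : Type*} [Group G] {f : ι → G}
    (h_one : ∃ i, f i = 1) (h_mul : ∀ i j, ∃ k, f k = f i * f j) (h_sq : ∀ i, f i * f i = 1)
    {g : G} : g ∈ closure (Set.range f) ↔ ∃ i, f i = g := by
  refine ⟨fun hg => ?_, fun hg => subset_closure hg⟩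
  induction hg using closure_induction with
  | mem g hg => exact hg
  | one => exact h_one
  | mul g h _ _ hg hh =>
    obtain ⟨⟨i, rfl⟩, ⟨j, rfl⟩⟩ := And.intro hg hh
    exact h_mul i j
  | inv g _ hg =>
    obtain ⟨i, rfl⟩ := hg
    exact ⟨i, eq_inv_of_mul_eq_one_left (h_sq i)⟩

noncomputable def ratUnits : Subgroup ℝˣ := (Units.map (algebraMap ℚ ℝ : ℚ →* ℝ)).range

theorem mk_eq_mk_iff_exists_rat {v w : ℝˣ} :
    (v : ℝˣ ⧸ ratUnits) = w ↔ ∃ q : ℚ, (w : ℝ) = q * v := by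
  rw [QuotientGroup.eq]
  constructor
  · rintro ⟨q, hq⟩
    refine ⟨q, ?_⟩
    have := congrArg Units.val hq
    simp only [Units.coe_map, MonoidHom.coe_coe, eq_ratCast, Units.val_mul,
      Units.val_inv_eq_inv_val] at this
    rw [this, mul_comm, mul_inv_cancel_left₀ v.ne_zero]
  · rintro ⟨q, hq⟩
    have hq0 : q ≠ 0 := by
      rintro rfl
      simp at hq
    refine ⟨Units.mk0 q hq0, Units.ext ?_⟩
    simp [hq, mul_comm (q : ℝ)]

section FusionRing

variable {I : Type*} {N : I → I → I → ℕ} {d : I → ℝ}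

theorem dim_unit_eq_one [Fintype I] [DecidableEq I] {one : I}
    (h_one_left : ∀ x y, N one x y = if x = y then 1 else 0) (hd_pos : ∀ x, 0 < d x)
    (hd_mul : ∀ x y, d x * d y = ∑ z, (N x y z : ℝ) * d z) : d one = 1 := by
  have h := hd_mul one one
  simp [h_one_left] at h
  exact (mul_eq_left₀ (hd_pos one).ne').mp h

theorem exists_fusion_pos [Fintype I] (hd_pos : ∀ x, 0 < d x)
    (hd_mul : ∀ x y, d x * d y = ∑ z, (N x y z : ℝ) * d z) (x y : I) : ∃ z, 0 < N x y z := by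
  by_contra! h
  have := hd_mul x y
  simp [Nat.le_zero.mp (h _)] at this
  exact this.elim (hd_pos x).ne' (hd_pos y).ne'

theorem exists_mul_eq_sq_mul_of_fusion_pos [Fintype I] {a m : I → ℕ} (ha : ∀ x, 0 < a x)
    (hm : ∀ x, Squarefree (m x)) (hdm : ∀ x, d x = a x * √(m x))
    (hd_mul : ∀ x y, d x * d y = ∑ z, (N x y z : ℝ) * d z) {x y z : I} (hN : 0 < N x y z) :
    ∃ t, 0 < t ∧ m x * m y = t ^ 2 * m z := by
  obtain ⟨s, t, -, ht, hst, hs⟩ :=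
    Nat.sq_mul_squarefree_of_pos (Nat.mul_pos (hm x).ne_zero.bot_lt (hm y).ne_zero.bot_lt)
  have hsum : ∑ w, ((N x y w * a w : ℕ) : ℝ) * √(m w) = ((a x * a y * t : ℕ) : ℚ) * √s := by
    calc ∑ w, ((N x y w * a w : ℕ) : ℝ) * √(m w) = d x * d y := by
          simp only [hd_mul x y, Nat.cast_mul, mul_assoc, ← hdm]
      _ = a x * a y * √((t ^ 2 * s : ℕ) : ℝ) := by
          rw [hst, hdm, hdm, Nat.cast_mul, Real.sqrt_mul (Nat.cast_nonneg _)]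
          ring
      _ = ((a x * a y * t : ℕ) : ℚ) * √s := by
          push_cast
          rw [Real.sqrt_mul (by positivity), Real.sqrt_sq (Nat.cast_nonneg _)]
          ring
  have hmz := eq_of_sum_natCast_mul_sqrt_eq_ratCast_mul_sqrt (fun w _ => hm w) hs hsum z
    (Finset.mem_univ z) (Nat.mul_ne_zero hN.ne' (ha z).ne')
  exact ⟨t, ht, hmz ▸ hst.symm⟩

variable (hd_pos : ∀ x, 0 < d x)

noncomputable def dimClass (x : I) : ℝˣ ⧸ ratUnits :=
  Units.mk0 (d x) (hd_pos x).ne'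

theorem dimClass_eq_iff {a m : I → ℕ} (ha : ∀ x, 0 < a x) (hm : ∀ x, Squarefree (m x))
    (hdm : ∀ x, d x = a x * √(m x)) {x y : I} :
    dimClass hd_pos x = dimClass hd_pos y ↔ m x = m y := by
  rw [dimClass, dimClass, mk_eq_mk_iff_exists_rat]
  simp only [Units.val_mk0, hdm]
  have hax : (a x : ℝ) ≠ 0 := by exact_mod_cast (ha x).ne'
  have hay : (a y : ℝ) ≠ 0 := by exact_mod_cast (ha y).ne'
  constructor
  · rintro ⟨q, hq⟩
    have hsum : ∑ i ∈ {y}, ((1 : ℕ) : ℝ) * √(m i) = ((q * a x / a y : ℚ) : ℝ) * √(m x) := by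
      push_cast
      field_simp
      simpa [mul_comm, mul_left_comm, mul_assoc] using hq
    exact (eq_of_sum_natCast_mul_sqrt_eq_ratCast_mul_sqrt (by simpa using hm y) (hm x) hsum y
      (Finset.mem_singleton_self y) one_ne_zero).symm
  · intro h
    exact ⟨a y / a x, by rw [h]; push_cast; field_simp⟩

theorem dimClass_mul_self {x : I} {k : ℕ} (hk : d x ^ 2 = k) :
    dimClass hd_pos x * dimClass hd_pos x = 1 := by
  rw [dimClass, ← QuotientGroup.mk_mul, ← QuotientGroup.mk_one, eq_comm, mk_eq_mk_iff_exists_rat]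
  exact ⟨k, by simp [← sq, hk]⟩

theorem dimClass_eq_mul_of_fusion_pos [Fintype I] (hk : ∀ x, ∃ k : ℕ, d x ^ 2 = k)
    (hd_mul : ∀ x y, d x * d y = ∑ z, (N x y z : ℝ) * d z) {x y z : I} (hN : 0 < N x y z) :
    dimClass hd_pos z = dimClass hd_pos x * dimClass hd_pos y := by
  choose a m ha hm hdm using fun x =>
    (hk x).elim fun _ => exists_eq_natCast_mul_sqrt_squarefree (hd_pos x)
  obtain ⟨t, ht, hxy⟩ := exists_mul_eq_sq_mul_of_fusion_pos ha hm hdm hd_mul hN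
  rw [dimClass, dimClass, dimClass, ← QuotientGroup.mk_mul, eq_comm, mk_eq_mk_iff_exists_rat]
  refine ⟨a z / (a x * a y * t), ?_⟩
  have hdxy : d x * d y = a x * a y * t * √(m z) := by
    have hxy' : (m x * m y : ℝ) = t ^ 2 * m z := by exact_mod_cast hxy
    rw [hdm, hdm, mul_mul_mul_comm, ← Real.sqrt_mul (Nat.cast_nonneg _), hxy',
      Real.sqrt_mul (by positivity), Real.sqrt_sq (Nat.cast_nonneg _)]
    ring
  have hax : (a x : ℝ) ≠ 0 := by exact_mod_cast (ha x).ne'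
  have hay : (a y : ℝ) ≠ 0 := by exact_mod_cast (ha y).ne'
  have ht0 : (t : ℝ) ≠ 0 := by exact_mod_cast ht.ne'
  simp only [Units.val_mk0, Units.val_mul, hdxy, hdm z]
  push_cast
  field_simp

noncomputable def gradingGroup : Subgroup (ℝˣ ⧸ ratUnits) :=
  Subgroup.closure (Set.range (dimClass hd_pos))

noncomputable def grading (x : I) : gradingGroup hd_pos :=
  ⟨dimClass hd_pos x, Subgroup.subset_closure ⟨x, rfl⟩⟩

theorem grading_surjective [Fintype I] [DecidableEq I] {one : I}
    (h_one_left : ∀ x y, N one x y = if x = y then 1 else 0)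
    (hk : ∀ x, ∃ k : ℕ, d x ^ 2 = k) (hd_mul : ∀ x y, d x * d y = ∑ z, (N x y z : ℝ) * d z) :
    Function.Surjective (grading hd_pos) := by
  have h_one : dimClass hd_pos one = 1 := by
    simp [dimClass, dim_unit_eq_one h_one_left hd_pos hd_mul]
  have h_mul (x y : I) : ∃ z, dimClass hd_pos z = dimClass hd_pos x * dimClass hd_pos y :=
    (exists_fusion_pos hd_pos hd_mul x y).imp fun _ =>
      dimClass_eq_mul_of_fusion_pos hd_pos hk hd_mul
  have h_sq (x : I) : dimClass hd_pos x * dimClass hd_pos x = 1 :=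
    (hk x).elim fun _ => dimClass_mul_self hd_pos
  intro g
  obtain ⟨x, hx⟩ :=
    (Subgroup.mem_closure_range_iff_of_mul_self ⟨one, h_one⟩ h_mul h_sq).mp g.2
  exact ⟨x, Subtype.ext hx⟩

end FusionRing

theorem weakly_integral_structure_general
    {I : Type*} [Fintype I] [DecidableEq I]
    (one : I) (star : I → I) (N : I → I → I → ℕ)
    (h_one_left : ∀ x y : I, N one x y = if x = y then 1 else 0)
    (d : I → ℝ)
    (hd_pos : ∀ x, 0 < d x)
    (hd_star : ∀ x, d (star x) = d x)
    (hd_mul : ∀ x y, d x * d y = ∑ z : I, (N x y z : ℝ) * d z)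
    (h_weakly_integral : ∀ x, ∃ k : ℕ, 0 < k ∧ d x ^ 2 = (k : ℝ)) :
    ∃ (E : Type) (_ : Fintype E) (_ : CommGroup E),
      (∀ g : E, g * g = 1) ∧
      ∃ (deg : I → E) (n : E → ℕ) (a : I → ℕ),
        Function.Surjective deg ∧
        deg one = 1 ∧
        (∀ x, deg (star x) = deg x) ∧
        (∀ x y z, 0 < N x y z → deg z = deg x * deg y) ∧
        Function.Injective n ∧
        (∀ g, Squarefree (n g) ∧ 0 < n g) ∧
        n 1 = 1 ∧
        (∀ x, 0 < a x) ∧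
        (∀ x, d x = (a x : ℝ) * Real.sqrt (n (deg x))) ∧
        (∀ g h : E, ∃ k : ℕ, 0 < k ∧
          Real.sqrt ((n g : ℝ) * (n h : ℝ) / (n (g * h) : ℝ)) = (k : ℝ)) := by
  have hk (x) := (h_weakly_integral x).imp fun _ => And.right
  choose a m ha hm hdm using fun x =>
    (hk x).elim fun _ => exists_eq_natCast_mul_sqrt_squarefree (hd_pos x)
  have hd_one := dim_unit_eq_one h_one_left hd_pos hd_mul
  let deg := grading hd_pos
  have hdeg_surj : Function.Surjective deg := grading_surjective hd_pos h_one_left hk hd_mul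
  have hdeg_one : deg one = 1 := Subtype.ext (by simp [deg, grading, dimClass, hd_one])
  have hdeg_mul {x y z} (hN : 0 < N x y z) : deg z = deg x * deg y :=
    Subtype.ext (dimClass_eq_mul_of_fusion_pos hd_pos hk hd_mul hN)
  have hdeg_eq_iff {x y} : deg x = deg y ↔ m x = m y :=
    Subtype.ext_iff.trans (dimClass_eq_iff hd_pos ha hm hdm)
  let n := m ∘ Function.surjInv hdeg_surj
  have hn (x) : n (deg x) = m x := hdeg_eq_iff.mp (Function.surjInv_eq hdeg_surj _)
  have := Finite.of_surjective deg hdeg_surj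
  refine ⟨gradingGroup hd_pos, Fintype.ofFinite _, inferInstance,
    hdeg_surj.forall.mpr fun x =>
      (hk x).elim fun _ hkx => Subtype.ext (dimClass_mul_self hd_pos hkx),
    deg, n, a, hdeg_surj, hdeg_one,
    fun x => Subtype.ext (by simp [deg, grading, dimClass, hd_star]),
    fun _ _ _ => hdeg_mul, fun g h hgh => ?_, fun g => ⟨hm _, (hm _).ne_zero.bot_lt⟩,
    by rw [← hdeg_one, hn, eq_one_of_natCast_mul_sqrt_eq_one ((hdm one).symm.trans hd_one)], ha,
    fun x => hn x ▸ hdm x, hdeg_surj.forall₂.mpr fun x y => ?_⟩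
  · rw [← Function.surjInv_eq hdeg_surj g, ← Function.surjInv_eq hdeg_surj h]
    exact hdeg_eq_iff.mpr hgh
  · obtain ⟨z, hN⟩ := exists_fusion_pos hd_pos hd_mul x y
    obtain ⟨t, ht, hxy⟩ := exists_mul_eq_sq_mul_of_fusion_pos ha hm hdm hd_mul hN
    rw [← hdeg_mul hN, hn, hn, hn]
    exact ⟨t, ht, sqrt_mul_div_eq_of_mul_eq_sq_mul (hm z).ne_zero hxy⟩

/-- **Structure theorem for weakly integral fusion rings**
(Proposition 2.2 of the paper, adapted from EGNO Prop. 3.5.7).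

A fusion ring is given by a finite type `I`, a unit `one`, an involution `star`,
and fusion coefficients `N x y z` (the multiplicity `N^z_{xy}` of `z` in `x ⊗ y`)
satisfying associativity, the unit axioms and Frobenius reciprocity, together with
a dimension function `d`.  If the fusion ring is weakly integral, i.e. `d x ^ 2`
is a positive integer for every `x`, then there is a finite abelian group `E` all
of whose elements square to the identity, a surjective grading `deg : I → E`, an
injective system of squarefree positive integers `n : E → ℕ` with `n 1 = 1`, and
positive integers `a x`, such that `d x = a x * √(n (deg x))` for all `x`, and
`√(n g * n h / n (g * h))` is a positive integer for all `g h : E`. -/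
theorem weakly_integral_structure
    {I : Type*} [Fintype I] [DecidableEq I]
    (one : I) (star : I → I) (N : I → I → I → ℕ)
    (h_star_one : star one = one)
    (h_assoc : ∀ x y z u : I,
      ∑ w : I, N x y w * N w z u = ∑ w : I, N y z w * N x w u)
    (h_one_left : ∀ x y : I, N one x y = if x = y then 1 else 0)
    (h_one_right : ∀ x y : I, N x one y = if x = y then 1 else 0)
    (h_frob₁ : ∀ x y z : I, N x y z = N (star x) z y)
    (h_frob₂ : ∀ x y z : I, N x y z = N z (star y) x)
    (d : I → ℝ)
    (hd_pos : ∀ x, 0 < d x)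
    (hd_star : ∀ x, d (star x) = d x)
    (hd_mul : ∀ x y, d x * d y = ∑ z : I, (N x y z : ℝ) * d z)
    (h_weakly_integral : ∀ x, ∃ k : ℕ, 0 < k ∧ d x ^ 2 = (k : ℝ)) :
    ∃ (E : Type) (_ : Fintype E) (_ : CommGroup E),
      (∀ g : E, g * g = 1) ∧
      ∃ (deg : I → E) (n : E → ℕ) (a : I → ℕ),
        Function.Surjective deg ∧
        deg one = 1 ∧
        (∀ x, deg (star x) = deg x) ∧
        (∀ x y z, 0 < N x y z → deg z = deg x * deg y) ∧
        Function.Injective n ∧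
        (∀ g, Squarefree (n g) ∧ 0 < n g) ∧
        n 1 = 1 ∧
        (∀ x, 0 < a x) ∧
        (∀ x, d x = (a x : ℝ) * Real.sqrt (n (deg x))) ∧
        (∀ g h : E, ∃ k : ℕ, 0 < k ∧
          Real.sqrt ((n g : ℝ) * (n h : ℝ) / (n (g * h) : ℝ)) = (k : ℝ)) :=
  weakly_integral_structure_general one star N h_one_left d hd_pos hd_star hd_mul h_weakly_integral
end

section
/- Invertible part of the lattice Tambara–Yamagami realization: with the Tambara–Yamagami lattice setup, for all a, b ∈ A one has D_a ∘ D_b = D_{ab}, and for every a ∈ A one has D_a ∘ D_m = D_m ∘ D_a = D_m. (The identity D_a ∘ D_m = D_m uses that the product Π_{i∈ZMod L} χ(x_i⁻¹·x_{i+1}, a⁻¹) telescopes to 1 around the periodic chain.) -/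
open scoped BigOperators

/-- The invertible symmetry operator `D_a`, acting on the tensor-product Hilbert
space `H = (ZMod L → A) → ℂ` of the periodic chain: `D_a |x⟩ = |a · x⟩`, given
as a matrix in the configuration basis. -/
noncomputable def DaMat {A : Type*} [CommGroup A] [Fintype A] [DecidableEq A]
    (L : ℕ) [NeZero L] (a : A) : Matrix (ZMod L → A) (ZMod L → A) ℂ :=
  Matrix.of fun x' x => if x' = fun i => a * x i then 1 else 0

/-- The non-invertible Tambara–Yamagami duality operator
`D_m |x⟩ = (ε/√|A|)^L ∑_{x'} (∏_i χ(x_i⁻¹ x_{i+1}, x'_i)) |x'⟩`. -/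
noncomputable def DmMat {A : Type*} [CommGroup A] [Fintype A] [DecidableEq A]
    (L : ℕ) [NeZero L] (χ : A → A → ℂ) (ε : ℂ) :
    Matrix (ZMod L → A) (ZMod L → A) ℂ :=
  Matrix.of fun x' x =>
    (ε / (Real.sqrt (Fintype.card A) : ℂ)) ^ L *
      ∏ i : ZMod L, χ ((x i)⁻¹ * x (i + 1)) (x' i)

/-- **Invertible part of the lattice Tambara–Yamagami realization**:
`D_a ∘ D_b = D_{ab}` for all `a b ∈ A`, and `D_a ∘ D_m = D_m ∘ D_a = D_m`
for every `a ∈ A`. -/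
theorem TY_invertible_part {A : Type*} [CommGroup A] [Fintype A] [DecidableEq A]
    (L : ℕ) [NeZero L]
    (χ : A → A → ℂ)
    (hχ_mul_left : ∀ a b c : A, χ (a * b) c = χ a c * χ b c)
    (hχ_mul_right : ∀ a b c : A, χ a (b * c) = χ a b * χ a c)
    (hχ_symm : ∀ a b : A, χ a b = χ b a)
    (hχ_nondeg : ∀ a : A, (∀ b : A, χ a b = 1) → a = 1)
    (ε : ℂ) (hε : ε = 1 ∨ ε = -1) :
    (∀ a b : A,
      (DaMat L a).mulVecLin ∘ₗ (DaMat L b).mulVecLin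
        = (DaMat L (a * b)).mulVecLin) ∧
    (∀ a : A,
      (DaMat L a).mulVecLin ∘ₗ (DmMat L χ ε).mulVecLin
        = (DmMat L χ ε).mulVecLin) ∧
    (∀ a : A,
      (DmMat L χ ε).mulVecLin ∘ₗ (DaMat L a).mulVecLin
        = (DmMat L χ ε).mulVecLin) := by
  -- dichotomy: either χ 1 c = 1 for all c, or χ ≡ 0
  have hdich : (∀ c : A, χ 1 c = 1) ∨ (∀ a b : A, χ a b = 0) := by
    by_cases h : ∀ c : A, χ 1 c = 1
    · exact Or.inl h
    · right
      push_neg at h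
      obtain ⟨c, hc⟩ := h
      have h1c : χ 1 c = 0 := by
        have hsq := hχ_mul_left 1 1 c
        rw [one_mul] at hsq
        by_contra h0
        exact hc (mul_left_cancel₀ h0 (by rw [← hsq, mul_one])).symm
      have hall : ∀ a : A, χ a c = 0 := fun a => by
        have := hχ_mul_left a 1 c
        simp [h1c] at this
        simpa [h1c] using this
      have h11 : χ 1 1 = 0 := by
        have := hχ_mul_left c c⁻¹ 1
        rw [mul_inv_cancel] at this
        rw [this, hχ_symm c 1, hall 1]
        ring
      intro a b
      have ha1 : χ a 1 = 0 := by
        have := hχ_mul_left a 1 1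
        simp [h11] at this
        simpa [h11] using this
      have := hχ_mul_right a b 1
      simp [ha1] at this
      simpa [ha1] using this
  refine ⟨?_, ?_, ?_⟩
  · -- D_a D_b = D_{ab}
    intro a b
    rw [← Matrix.mulVecLin_mul]
    congr 1
    ext x' x
    simp only [Matrix.mul_apply, DaMat, Matrix.of_apply, mul_ite, mul_one, mul_zero,
      Finset.sum_ite_eq', Finset.mem_univ, if_true]
    simp [mul_assoc]
  · -- D_a D_m = D_m
    intro a
    rw [← Matrix.mulVecLin_mul]
    congr 1
    ext x' x
    have hcond : ∀ y : ZMod L → A, (x' = fun i => a * y i) ↔ (y = fun i => a⁻¹ * x' i) := by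
      intro y
      constructor
      · intro h; funext i; rw [h]; group
      · intro h; funext i; rw [h]; group
    simp only [Matrix.mul_apply, DaMat, DmMat, Matrix.of_apply]
    simp only [hcond, ite_mul, one_mul, zero_mul, Finset.sum_ite_eq', Finset.mem_univ, if_true]
    congr 1
    rcases hdich with hone | hzero
    · -- characters case
      have key : ∀ i : ZMod L, χ ((x i)⁻¹ * x (i + 1)) (a⁻¹ * x' i)
          = χ ((x i)⁻¹ * x (i + 1)) a⁻¹ * χ ((x i)⁻¹ * x (i + 1)) (x' i) := fun i =>
        hχ_mul_right _ _ _
      rw [Finset.prod_congr rfl (fun i _ => key i), Finset.prod_mul_distrib]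
      have htel : ∏ i : ZMod L, χ ((x i)⁻¹ * x (i + 1)) a⁻¹ = 1 := by
        let φ : A →* ℂ := ⟨⟨fun g => χ g a⁻¹, hone a⁻¹⟩, fun g h => hχ_mul_left g h a⁻¹⟩
        have : ∏ i : ZMod L, χ ((x i)⁻¹ * x (i + 1)) a⁻¹
            = φ (∏ i : ZMod L, (x i)⁻¹ * x (i + 1)) := (map_prod φ _ _).symm
        rw [this]
        have : ∏ i : ZMod L, (x i)⁻¹ * x (i + 1) = 1 := by
          rw [Finset.prod_mul_distrib, Finset.prod_inv_distrib]
          have : ∏ i : ZMod L, x (i + 1) = ∏ i : ZMod L, x i :=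
            Fintype.prod_equiv (Equiv.addRight (1 : ZMod L)) _ _ (fun i => rfl)
          rw [this, inv_mul_cancel]
        rw [this, map_one]
      rw [htel, one_mul]
    · -- zero character case: both sides are 0
      obtain ⟨i0⟩ := (inferInstance : Nonempty (ZMod L))
      rw [Finset.prod_eq_zero (Finset.mem_univ i0) (hzero _ _),
        Finset.prod_eq_zero (Finset.mem_univ i0) (hzero _ _)]
  · -- D_m D_a = D_m
    intro a
    rw [← Matrix.mulVecLin_mul]
    congr 1
    ext x' x
    simp only [Matrix.mul_apply, DaMat, DmMat, Matrix.of_apply, mul_ite, mul_one, mul_zero,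
      Finset.sum_ite_eq', Finset.mem_univ, if_true]
    congr 1
    refine Finset.prod_congr rfl (fun i _ => ?_)
    congr 1
    group
end

section
/- Ising/Kramers–Wannier lattice fusion rule: let L ≥ 1 and let H be the complex vector space of functions (ZMod L → ZMod 2) → ℂ with standard basis |x⟩ indexed by spin configurations x : ZMod L → ZMod 2. Define D_f|x⟩ := |x + 1̄⟩ (adding 1 to every coordinate, the global spin flip), the translation T|x⟩ := |x'⟩ with x'_i := x_{i+1}, and the Kramers–Wannier operator D_σ|x⟩ := 2^{−L/2} · Σ_{x' : ZMod L → ZMod 2} (Π_{i∈ZMod L} (−1)^{(x_i + x_{i+1})·x'_i}) |x'⟩. Then D_f ∘ D_f = id, D_f ∘ D_σ = D_σ ∘ D_f = D_σ, and D_σ ∘ D_σ = T ∘ (id + D_f). -/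
open scoped BigOperators

/-- The global spin flip `D_f |x⟩ = |x + 1̄⟩` on the Hilbert space
`H = (ZMod L → ZMod 2) → ℂ` of the periodic Ising chain, as a matrix in the
configuration basis. -/
noncomputable def DfMat (L : ℕ) [NeZero L] :
    Matrix (ZMod L → ZMod 2) (ZMod L → ZMod 2) ℂ :=
  Matrix.of fun x' x => if x' = fun i => x i + 1 then 1 else 0

/-- The lattice translation `T |x⟩ = |x'⟩` with `x'_i = x_{i+1}`. -/
noncomputable def TIsingMat (L : ℕ) [NeZero L] :
    Matrix (ZMod L → ZMod 2) (ZMod L → ZMod 2) ℂ :=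
  Matrix.of fun x' x => if x' = fun i => x (i + 1) then 1 else 0

/-- `(−1)^c` for `c : ZMod 2`: `1` if `c = 0` and `−1` if `c = 1`. -/
noncomputable def isingSign (c : ZMod 2) : ℂ := if c = 0 then 1 else -1

/-- The Kramers–Wannier duality operator
`D_σ |x⟩ = 2^{−L/2} ∑_{x'} (∏_i (−1)^{(x_i + x_{i+1})·x'_i}) |x'⟩`. -/
noncomputable def DsigmaMat (L : ℕ) [NeZero L] :
    Matrix (ZMod L → ZMod 2) (ZMod L → ZMod 2) ℂ :=
  Matrix.of fun x' x =>
    ((1 : ℂ) / (Real.sqrt 2 : ℂ)) ^ L *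
      ∏ i : ZMod L, isingSign ((x i + x (i + 1)) * x' i)

/-!
Write `∂x` for the domain-wall configuration `i ↦ x i + x (i + 1)`, so that
`D_σ x' x = 2^{-L/2} (−1)^{⟨∂x, x'⟩}`. The spin flip changes neither `∂x` nor the sign `(−1)^{⟨∂x, 1⟩}`,
because `∑ i, ∂x i = 2 ∑ i, x i = 0`; this absorbs `D_f` on both sides of `D_σ`. In `D_σ²` the sum over
the intermediate configuration `y` is, after summation by parts on the cycle, a character sum
`∑_y (−1)^{⟨y, a⟩}` which equals `2^L` if `a = 0` and vanishes otherwise. Here `a = ∂ᵀd` is the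
coboundary of `d = x'' + T x`, and it vanishes exactly when `d` is constant, i.e. when
`x'' = T x` or `x'' = T x + 1`: these are the two terms of `T (1 + D_f)`.
-/

open Finset Matrix

lemma ZMod.eq_zero_or_eq_one_of_two (c : ZMod 2) : c = 0 ∨ c = 1 := by
  revert c; decide

lemma isingSign_add (a b : ZMod 2) : isingSign (a + b) = isingSign a * isingSign b := by
  obtain rfl | rfl := a.eq_zero_or_eq_one_of_two <;>
  obtain rfl | rfl := b.eq_zero_or_eq_one_of_two <;>
  simp [isingSign, show (1 : ZMod 2) + 1 = 0 from rfl]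

lemma prod_isingSign {ι : Type*} (s : Finset ι) (f : ι → ZMod 2) :
    ∏ i ∈ s, isingSign (f i) = isingSign (∑ i ∈ s, f i) := by
  induction s using Finset.cons_induction with
  | empty => simp [isingSign]
  | cons a s ha ih => rw [prod_cons, sum_cons, isingSign_add, ih]

lemma sum_isingSign_mul (a : ZMod 2) :
    ∑ b : ZMod 2, isingSign (b * a) = if a = 0 then 2 else 0 := by
  rw [show (univ : Finset (ZMod 2)) = {0, 1} by decide, sum_pair zero_ne_one]
  obtain rfl | rfl := a.eq_zero_or_eq_one_of_two <;> norm_num [isingSign]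

lemma sum_prod_isingSign_mul {ι : Type*} [Fintype ι] [DecidableEq ι] (a : ι → ZMod 2) :
    ∑ y : ι → ZMod 2, ∏ i, isingSign (y i * a i) =
      if a = 0 then 2 ^ Fintype.card ι else 0 := by
  rw [← Fintype.prod_sum fun i b => isingSign (b * a i)]
  simp only [sum_isingSign_mul, Fintype.prod_ite_zero, prod_const, card_univ,
    funext_iff, Pi.zero_apply]

lemma one_div_sqrt_two_pow_mul_self_mul_two_pow (n : ℕ) :
    (1 / (Real.sqrt 2 : ℂ)) ^ n * (1 / (Real.sqrt 2 : ℂ)) ^ n * 2 ^ n = 1 := by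
  rw [← mul_pow, ← mul_pow, ← sq, div_pow, ← Complex.ofReal_pow, Real.sq_sqrt zero_le_two]
  norm_num

lemma ZMod.apply_eq_apply_zero_of_apply_add_one {n : ℕ} [NeZero n] {α : Type*} {f : ZMod n → α}
    (h : ∀ i, f (i + 1) = f i) (i : ZMod n) : f i = f 0 := by
  obtain ⟨k, rfl⟩ := ZMod.natCast_zmod_surjective i
  induction k with
  | zero => simp
  | succ k ih => rw [Nat.cast_succ, h, ih]

section Chain

variable {L : ℕ} [NeZero L]

lemma forall_apply_eq_apply_sub_one_iff {d : ZMod L → ZMod 2} :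
    (∀ i, d i = d (i - 1)) ↔ d = 0 ∨ d = 1 := by
  constructor
  · intro h
    have hd : d = fun _ => d 0 :=
      funext <| ZMod.apply_eq_apply_zero_of_apply_add_one fun i => by simpa using h (i + 1)
    obtain h0 | h0 := (d 0).eq_zero_or_eq_one_of_two
    · exact .inl (hd.trans (by rw [h0]; rfl))
    · exact .inr (hd.trans (by rw [h0]; rfl))
  · rintro (rfl | rfl) _ <;> rfl

lemma sum_apply_add_apply_add_one (x : ZMod L → ZMod 2) : ∑ i, (x i + x (i + 1)) = 0 := by
  rw [sum_add_distrib, Fintype.sum_equiv (Equiv.addRight 1) (fun i => x (i + 1)) x fun _ => rfl,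
    CharTwo.add_self_eq_zero]

/-- Summation by parts on the cycle: `⟨∂y, u⟩ + ⟨∂v, y⟩ = ⟨y, ∂ᵀu + ∂v⟩`. -/
lemma sum_boundary_pairing (y u v : ZMod L → ZMod 2) :
    ∑ i, ((y i + y (i + 1)) * u i + (v i + v (i + 1)) * y i) =
      ∑ i, y i * ((u i + v (i + 1)) + (u (i - 1) + v i)) := by
  have shift : ∑ i, y (i + 1) * u i = ∑ i, y i * u (i - 1) :=
    Fintype.sum_equiv (Equiv.addRight 1) _ _ fun i => by simp
  simp only [add_mul, mul_add, sum_add_distrib, shift]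
  simp only [← sum_add_distrib]
  exact sum_congr rfl fun i _ => by ring

lemma DfMat_eq_submatrix :
    DfMat L = (1 : Matrix (ZMod L → ZMod 2) (ZMod L → ZMod 2) ℂ).submatrix id
      (Equiv.addRight 1) := by
  ext x' x
  simp only [DfMat, of_apply, Equiv.coe_addRight, submatrix_apply, one_apply, id_eq]
  rfl

lemma mul_DfMat {m : Type*} (M : Matrix m (ZMod L → ZMod 2) ℂ) :
    M * DfMat L = M.submatrix id (· + 1) := by
  rw [DfMat_eq_submatrix, ← Equiv.coe_refl, mul_submatrix_one]
  rfl

lemma DfMat_mul {n : Type*} (M : Matrix (ZMod L → ZMod 2) n ℂ) :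
    DfMat L * M = M.submatrix (· + 1) id := by
  rw [DfMat_eq_submatrix, one_submatrix_mul]
  ext x' x
  simp [CharTwo.neg_eq]

lemma DfMat_mul_DfMat : DfMat L * DfMat L = 1 := by
  rw [DfMat_mul, DfMat_eq_submatrix, submatrix_submatrix]
  exact submatrix_one_equiv (Equiv.addRight 1)

lemma DsigmaMat_apply (x' x : ZMod L → ZMod 2) :
    DsigmaMat L x' x =
      (1 / (Real.sqrt 2 : ℂ)) ^ L * isingSign (∑ i, (x i + x (i + 1)) * x' i) := by
  rw [DsigmaMat, of_apply, prod_isingSign]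

lemma DsigmaMat_mul_DfMat : DsigmaMat L * DfMat L = DsigmaMat L := by
  ext x' x
  simp only [mul_DfMat, submatrix_apply, id, DsigmaMat, of_apply, Pi.add_apply, Pi.one_apply,
    add_add_add_comm, CharTwo.add_self_eq_zero, add_zero]

lemma DfMat_mul_DsigmaMat : DfMat L * DsigmaMat L = DsigmaMat L := by
  ext x' x
  simp only [DfMat_mul, submatrix_apply, id, DsigmaMat_apply, Pi.add_apply, Pi.one_apply,
    mul_add, mul_one]
  rw [sum_add_distrib, sum_apply_add_apply_add_one, add_zero]

lemma DsigmaMat_mul_DsigmaMat_apply (x'' x : ZMod L → ZMod 2) :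
    (DsigmaMat L * DsigmaMat L) x'' x =
      if x'' = (fun i => x (i + 1)) ∨ x'' = (fun i => x (i + 1) + 1) then 1 else 0 := by
  have hentry : ∀ y, DsigmaMat L x'' y * DsigmaMat L y x =
      (1 / (Real.sqrt 2 : ℂ)) ^ L * (1 / (Real.sqrt 2 : ℂ)) ^ L *
        ∏ i, isingSign (y i * (x'' i + x (i + 1) + (x'' (i - 1) + x i))) := fun y => by
    rw [DsigmaMat_apply, DsigmaMat_apply, mul_mul_mul_comm, ← isingSign_add, ← sum_add_distrib,
      sum_boundary_pairing, prod_isingSign]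
  have hker : (fun i => x'' i + x (i + 1) + (x'' (i - 1) + x i)) = 0 ↔
      x'' = (fun i => x (i + 1)) ∨ x'' = (fun i => x (i + 1) + 1) :=
    calc _ ↔ ∀ i, (x'' + fun i => x (i + 1)) i = (x'' + fun i => x (i + 1)) (i - 1) := by
          simp only [funext_iff, Pi.zero_apply, Pi.add_apply, sub_add_cancel, CharTwo.add_eq_zero]
      _ ↔ (x'' + fun i => x (i + 1)) = 0 ∨ (x'' + fun i => x (i + 1)) = 1 :=
          forall_apply_eq_apply_sub_one_iff
      _ ↔ _ := by
          have add_eq_one_iff : ∀ a b : ZMod 2, a + b = 1 ↔ a = b + 1 := by decide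
          simp only [funext_iff, Pi.add_apply, Pi.one_apply, CharTwo.add_eq_zero, add_eq_one_iff]
  rw [mul_apply, Fintype.sum_congr _ _ hentry, ← mul_sum, sum_prod_isingSign_mul, ZMod.card]
  simp only [hker, mul_ite, one_div_sqrt_two_pow_mul_self_mul_two_pow, mul_zero]

lemma DsigmaMat_mul_DsigmaMat : DsigmaMat L * DsigmaMat L = TIsingMat L * (1 + DfMat L) := by
  ext x'' x
  rw [DsigmaMat_mul_DsigmaMat_apply, mul_add, mul_one, mul_DfMat, Matrix.add_apply,
    submatrix_apply]
  have hne : (fun i => x (i + 1)) ≠ fun i => x (i + 1) + 1 := fun h => by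
    simpa using congrFun h 0
  simp only [TIsingMat, of_apply, id, Pi.add_apply, Pi.one_apply]
  by_cases h : x'' = fun i => x (i + 1) <;> simp [h, hne]

end Chain

/-- **Ising/Kramers–Wannier lattice fusion rule**: `D_f ∘ D_f = id`,
`D_f ∘ D_σ = D_σ ∘ D_f = D_σ`, and `D_σ ∘ D_σ = T ∘ (id + D_f)`. -/
theorem ising_lattice_fusion_rule (L : ℕ) [NeZero L] :
    ((DfMat L).mulVecLin ∘ₗ (DfMat L).mulVecLin = LinearMap.id) ∧
    ((DfMat L).mulVecLin ∘ₗ (DsigmaMat L).mulVecLin = (DsigmaMat L).mulVecLin) ∧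
    ((DsigmaMat L).mulVecLin ∘ₗ (DfMat L).mulVecLin = (DsigmaMat L).mulVecLin) ∧
    ((DsigmaMat L).mulVecLin ∘ₗ (DsigmaMat L).mulVecLin
      = (TIsingMat L).mulVecLin ∘ₗ (LinearMap.id + (DfMat L).mulVecLin)) := by
  simp only [← Matrix.mulVecLin_mul, ← Matrix.mulVecLin_one, ← Matrix.mulVecLin_add,
    DfMat_mul_DfMat, DfMat_mul_DsigmaMat, DsigmaMat_mul_DfMat, DsigmaMat_mul_DsigmaMat, and_self]
end

section
/- Multiplicities of x ⊗ R₀ in a weakly integral graded fusion ring: let a fusion ring with dimension function d carry an E-grading deg for a finite group E, together with weakly integral graded data (n_g, a_x). Then for every simple x with deg(x) = g and every simple y: Σ_{z : deg z = 1} d(z)·N^y_{xz} equals n_g·a_x·a_y if deg(y) = g, and equals 0 otherwise. Equivalently, with R_0 := Σ_{z∈C_1} d(z)·z and R_g := Σ_{y∈C_g} a_y·y, one has x ⊗ R_0 = n_g·a_x·R_g. -/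
open scoped BigOperators

/-- **Multiplicities of `x ⊗ R₀` in a weakly integral graded fusion ring**:
for a fusion ring `(I, one, star, N)` with dimension function `d`, an
`E`-grading `deg` and weakly integral graded data `(n, a)`, one has, for any
simple `x` of degree `g` and any simple `y`:
`∑_{z : deg z = 1} d(z)·N^y_{xz} = n_g·a_x·a_y` if `deg y = g`, and `= 0`
otherwise.  (Here `N x z y` denotes `N^y_{xz}`, the multiplicity of `y` in
`x ⊗ z`.)  Equivalently, with `R₀ = ∑_{z ∈ C_1} d(z)·z` and
`R_g = ∑_{y ∈ C_g} a_y·y`, one has `x ⊗ R₀ = n_g·a_x·R_g`. -/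
theorem fusion_with_R0
    {I : Type*} [Fintype I] [DecidableEq I]
    {E : Type*} [Group E] [DecidableEq E]
    (one : I) (star : I → I) (N : I → I → I → ℕ)
    (h_star_one : star one = one)
    (h_assoc : ∀ x y z u : I,
      ∑ w : I, N x y w * N w z u = ∑ w : I, N y z w * N x w u)
    (h_one_left : ∀ x y : I, N one x y = if x = y then 1 else 0)
    (h_one_right : ∀ x y : I, N x one y = if x = y then 1 else 0)
    (h_frob₁ : ∀ x y z : I, N x y z = N (star x) z y)
    (h_frob₂ : ∀ x y z : I, N x y z = N z (star y) x)
    (d : I → ℝ)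
    (hd_pos : ∀ x, 0 < d x)
    (hd_star : ∀ x, d (star x) = d x)
    (hd_mul : ∀ x y, d x * d y = ∑ z : I, (N x y z : ℝ) * d z)
    (deg : I → E)
    (hdeg_one : deg one = 1)
    (hdeg_star : ∀ x, deg (star x) = (deg x)⁻¹)
    (hdeg_mul : ∀ x y z, 0 < N x y z → deg z = deg x * deg y)
    (n : E → ℕ) (a : I → ℕ)
    (hn_sqfree : ∀ g, Squarefree (n g)) (hn_pos : ∀ g, 0 < n g)
    (hn_one : n 1 = 1)
    (ha_pos : ∀ x, 0 < a x)
    (hd_eq : ∀ x, d x = (a x : ℝ) * Real.sqrt (n (deg x))) :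
    ∀ (g : E) (x y : I), deg x = g →
      ∑ z ∈ Finset.univ.filter (fun z => deg z = 1), d z * (N x z y : ℝ)
        = if deg y = g then (n g : ℝ) * (a x : ℝ) * (a y : ℝ) else 0 := by
  intro g x y hx
  by_cases hy : deg y = g
  · simp only [hy, if_pos rfl]
    have key : ∀ z : I, d z * (N x z y : ℝ) = (N (star x) y z : ℝ) * d z := by
      intro z
      rw [← h_frob₁ x z y]; ring
    have hzero : ∀ z : I, deg z ≠ 1 → (N (star x) y z : ℝ) * d z = 0 := by
      intro z hz
      have : N (star x) y z = 0 := by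
        by_contra h
        exact hz (by rw [hdeg_mul _ _ _ (Nat.pos_of_ne_zero h), hdeg_star, hx, hy,
          inv_mul_cancel])
      simp [this]
    calc ∑ z ∈ Finset.univ.filter (fun z => deg z = 1), d z * (N x z y : ℝ)
        = ∑ z ∈ Finset.univ.filter (fun z => deg z = 1), (N (star x) y z : ℝ) * d z := by
          exact Finset.sum_congr rfl (fun z _ => key z)
      _ = ∑ z : I, (N (star x) y z : ℝ) * d z := by
          refine Finset.sum_subset (Finset.filter_subset _ _) ?_
          intro z _ hz
          exact hzero z (by simpa using hz)
      _ = d (star x) * d y := (hd_mul _ _).symm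
      _ = (n g : ℝ) * (a x : ℝ) * (a y : ℝ) := by
          rw [hd_star, hd_eq x, hd_eq y, hx, hy]
          have : Real.sqrt (n g) * Real.sqrt (n g) = (n g : ℝ) :=
            Real.mul_self_sqrt (by positivity)
          rw [mul_mul_mul_comm, this]; ring
  · simp only [hy, if_neg hy]
    refine Finset.sum_eq_zero (fun z hz => ?_)
    have hz1 : deg z = 1 := by simpa using hz
    have : N x z y = 0 := by
      by_contra h
      exact hy (by rw [hdeg_mul _ _ _ (Nat.pos_of_ne_zero h), hx, hz1, mul_one])
    simp [this]
end

section
/- Fusion with R_h in a weakly integral graded fusion ring: let a fusion ring with dimension function d carry an E-grading deg for a finite group E, together with weakly integral graded data (n_g, a_x), and for h ∈ E set R_h := Σ_{y∈C_h} a_y·y. Then for every simple x with deg(x) = g and every simple z, the real number Σ_{y : deg y = h} a_y·N^z_{xy} equals a_x·a_z·√(n_g·n_{gh}/n_h) if deg(z) = g·h, and equals 0 otherwise. Equivalently, x ⊗ R_h = √(n_g·n_{gh}/n_h)·a_x·R_{gh}. -/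
open scoped BigOperators

/-- **Fusion with `R_h` in a weakly integral graded fusion ring**:
for a fusion ring `(I, one, star, N)` with dimension function `d`, an
`E`-grading `deg` and weakly integral graded data `(n, a)`, setting
`R_h = ∑_{y ∈ C_h} a_y·y`, one has for every simple `x` of degree `g` and
every simple `z`:
`∑_{y : deg y = h} a_y·N^z_{xy} = a_x·a_z·√(n_g·n_{gh}/n_h)` if
`deg z = g·h`, and `= 0` otherwise.  (Here `N x y z` denotes `N^z_{xy}`.)
Equivalently, `x ⊗ R_h = √(n_g·n_{gh}/n_h)·a_x·R_{gh}`. -/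
theorem fusion_with_Rh
    {I : Type*} [Fintype I] [DecidableEq I]
    {E : Type*} [Group E] [DecidableEq E]
    (one : I) (star : I → I) (N : I → I → I → ℕ)
    (h_star_one : star one = one)
    (h_assoc : ∀ x y z u : I,
      ∑ w : I, N x y w * N w z u = ∑ w : I, N y z w * N x w u)
    (h_one_left : ∀ x y : I, N one x y = if x = y then 1 else 0)
    (h_one_right : ∀ x y : I, N x one y = if x = y then 1 else 0)
    (h_frob₁ : ∀ x y z : I, N x y z = N (star x) z y)
    (h_frob₂ : ∀ x y z : I, N x y z = N z (star y) x)
    (d : I → ℝ)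
    (hd_pos : ∀ x, 0 < d x)
    (hd_star : ∀ x, d (star x) = d x)
    (hd_mul : ∀ x y, d x * d y = ∑ z : I, (N x y z : ℝ) * d z)
    (deg : I → E)
    (hdeg_one : deg one = 1)
    (hdeg_star : ∀ x, deg (star x) = (deg x)⁻¹)
    (hdeg_mul : ∀ x y z, 0 < N x y z → deg z = deg x * deg y)
    (n : E → ℕ) (a : I → ℕ)
    (hn_sqfree : ∀ g, Squarefree (n g)) (hn_pos : ∀ g, 0 < n g)
    (hn_one : n 1 = 1)
    (ha_pos : ∀ x, 0 < a x)
    (hd_eq : ∀ x, d x = (a x : ℝ) * Real.sqrt (n (deg x))) :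
    ∀ (g h : E) (x z : I), deg x = g →
      (∑ y ∈ Finset.univ.filter (fun y => deg y = h), (a y : ℝ) * (N x y z : ℝ))
        = if deg z = g * h then
            (a x : ℝ) * (a z : ℝ) *
              Real.sqrt ((n g : ℝ) * (n (g * h) : ℝ) / (n h : ℝ))
          else 0 := by
  intro g h x z hx
  by_cases hz : deg z = g * h
  · rw [if_pos hz]
    have key : ∀ y, (N x y z : ℝ) = (N (star x) z y : ℝ) := fun y => by rw [h_frob₁]
    have filt : (∑ y ∈ Finset.univ.filter (fun y => deg y = h), (a y : ℝ) * (N x y z : ℝ))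
        = ∑ y : I, (a y : ℝ) * (N (star x) z y : ℝ) := by
      rw [Finset.sum_filter]
      apply Finset.sum_congr rfl
      intro y _
      by_cases hy : deg y = h
      · simp [hy, key]
      · have hN0 : N (star x) z y = 0 := by
          by_contra hN
          have hpos : 0 < N (star x) z y := Nat.pos_of_ne_zero hN
          have := hdeg_mul (star x) z y hpos
          rw [hdeg_star, hx, hz] at this
          exact hy (by rw [this]; group)
        simp [hy, hN0, key]
    rw [filt]
    have hsum : d (star x) * d z
        = Real.sqrt (n h) * ∑ y : I, (a y : ℝ) * (N (star x) z y : ℝ) := by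
      rw [hd_mul, Finset.mul_sum]
      apply Finset.sum_congr rfl
      intro y _
      by_cases hN : N (star x) z y = 0
      · simp [hN]
      · have hpos : 0 < N (star x) z y := Nat.pos_of_ne_zero hN
        have hy : deg y = h := by
          have := hdeg_mul (star x) z y hpos
          rw [hdeg_star, hx, hz] at this
          rw [this]; group
        rw [hd_eq, hy]; ring
    have hnh : (0:ℝ) < Real.sqrt (n h) := Real.sqrt_pos.mpr (by exact_mod_cast hn_pos h)
    have heq : ∑ y : I, (a y : ℝ) * (N (star x) z y : ℝ)
        = d (star x) * d z / Real.sqrt (n h) := by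
      rw [hsum]; field_simp
    rw [heq, hd_star, hd_eq x, hd_eq z, hx, hz]
    rw [Real.sqrt_div (by positivity), Real.sqrt_mul (by positivity)]
    field_simp
  · rw [if_neg hz]
    apply Finset.sum_eq_zero
    intro y hy
    simp only [Finset.mem_filter] at hy
    have hN0 : N x y z = 0 := by
      by_contra hN
      exact hz (by rw [hdeg_mul x y z (Nat.pos_of_ne_zero hN), hx, hy.2])
    simp [hN0]
end

section
/- R_h is central: let a fusion ring with dimension function d carry an E-grading deg for a finite abelian group E, together with weakly integral graded data (n_g, a_x), and set R_h := Σ_{y∈C_h} a_y·y. Then for all simples x, z and all h ∈ E: Σ_{y : deg y = h} a_y·N^z_{xy} = Σ_{y : deg y = h} a_y·N^z_{yx}, i.e. x ⊗ R_h = R_h ⊗ x in the fusion ring. -/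
open scoped BigOperators

/-- **`R_h` is central**: for a fusion ring `(I, one, star, N)` with dimension
function `d`, an `E`-grading `deg` for a finite abelian group `E`, and weakly
integral graded data `(n, a)`, setting `R_h = ∑_{y ∈ C_h} a_y·y`, one has for
all simples `x, z` and all `h ∈ E`:
`∑_{y : deg y = h} a_y·N^z_{xy} = ∑_{y : deg y = h} a_y·N^z_{yx}`,
i.e. `x ⊗ R_h = R_h ⊗ x` in the fusion ring.  (Here `N x y z` denotes
`N^z_{xy}`.) -/
theorem Rh_central
    {I : Type*} [Fintype I] [DecidableEq I]
    {E : Type*} [CommGroup E] [Fintype E] [DecidableEq E]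
    (one : I) (star : I → I) (N : I → I → I → ℕ)
    (h_star_one : star one = one)
    (h_assoc : ∀ x y z u : I,
      ∑ w : I, N x y w * N w z u = ∑ w : I, N y z w * N x w u)
    (h_one_left : ∀ x y : I, N one x y = if x = y then 1 else 0)
    (h_one_right : ∀ x y : I, N x one y = if x = y then 1 else 0)
    (h_frob₁ : ∀ x y z : I, N x y z = N (star x) z y)
    (h_frob₂ : ∀ x y z : I, N x y z = N z (star y) x)
    (d : I → ℝ)
    (hd_pos : ∀ x, 0 < d x)
    (hd_star : ∀ x, d (star x) = d x)
    (hd_mul : ∀ x y, d x * d y = ∑ z : I, (N x y z : ℝ) * d z)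
    (deg : I → E)
    (hdeg_one : deg one = 1)
    (hdeg_star : ∀ x, deg (star x) = (deg x)⁻¹)
    (hdeg_mul : ∀ x y z, 0 < N x y z → deg z = deg x * deg y)
    (n : E → ℕ) (a : I → ℕ)
    (hn_sqfree : ∀ g, Squarefree (n g)) (hn_pos : ∀ g, 0 < n g)
    (hn_one : n 1 = 1)
    (ha_pos : ∀ x, 0 < a x)
    (hd_eq : ∀ x, d x = (a x : ℝ) * Real.sqrt (n (deg x))) :
    ∀ (x z : I) (h : E),
      ∑ y ∈ Finset.univ.filter (fun y => deg y = h), a y * N x y z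
        = ∑ y ∈ Finset.univ.filter (fun y => deg y = h), a y * N y x z := by

  intro x z h
  have key : ∀ u v : I, d u * d v
      = Real.sqrt (n (deg u * deg v)) *
        ∑ y ∈ Finset.univ.filter (fun y => deg y = deg u * deg v),
          ((a y : ℝ) * (N u v y : ℝ)) := by
    intro u v
    rw [hd_mul, Finset.mul_sum,
      ← Finset.sum_filter_add_sum_filter_not Finset.univ (fun y => deg y = deg u * deg v)]
    have h2 : ∑ y ∈ Finset.univ.filter (fun y => ¬ deg y = deg u * deg v),
        (N u v y : ℝ) * d y = 0 := by
      apply Finset.sum_eq_zero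
      intro y hy
      simp only [Finset.mem_filter] at hy
      have : N u v y = 0 := by
        by_contra hne
        exact hy.2 (hdeg_mul u v y (Nat.pos_of_ne_zero hne))
      simp [this]
    rw [h2, add_zero]
    apply Finset.sum_congr rfl
    intro y hy
    simp only [Finset.mem_filter] at hy
    rw [hd_eq y, hy.2]
    ring
  by_cases hc : deg z = deg x * h
  · have hf1 : (deg x)⁻¹ * deg z = h := by rw [hc]; group
    have hf2 : deg z * (deg x)⁻¹ = h := by rw [mul_comm]; exact hf1
    have e1 := key (star x) z
    have e2 := key z (star x)
    rw [hdeg_star, hf1] at e1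
    rw [hdeg_star, hf2] at e2
    have s1 : ∑ y ∈ Finset.univ.filter (fun y => deg y = h),
          ((a y : ℝ) * (N (star x) z y : ℝ))
        = ∑ y ∈ Finset.univ.filter (fun y => deg y = h),
          ((a y : ℝ) * (N x y z : ℝ)) := by
      apply Finset.sum_congr rfl; intro y _; rw [← h_frob₁]
    have s2 : ∑ y ∈ Finset.univ.filter (fun y => deg y = h),
          ((a y : ℝ) * (N z (star x) y : ℝ))
        = ∑ y ∈ Finset.univ.filter (fun y => deg y = h),
          ((a y : ℝ) * (N y x z : ℝ)) := by
      apply Finset.sum_congr rfl; intro y _; rw [← h_frob₂]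
    rw [s1] at e1; rw [s2] at e2
    have hsq : (0:ℝ) < Real.sqrt (n h) :=
      Real.sqrt_pos.mpr (by exact_mod_cast hn_pos h)
    have hcomm : d (star x) * d z = d z * d (star x) := mul_comm _ _
    have hmain : Real.sqrt (n h) * ∑ y ∈ Finset.univ.filter (fun y => deg y = h),
          ((a y : ℝ) * (N x y z : ℝ))
        = Real.sqrt (n h) * ∑ y ∈ Finset.univ.filter (fun y => deg y = h),
          ((a y : ℝ) * (N y x z : ℝ)) := by
      rw [← e1, ← e2]; exact hcomm
    have hS := mul_left_cancel₀ (ne_of_gt hsq) hmain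
    have : ((∑ y ∈ Finset.univ.filter (fun y => deg y = h), a y * N x y z : ℕ) : ℝ)
        = ((∑ y ∈ Finset.univ.filter (fun y => deg y = h), a y * N y x z : ℕ) : ℝ) := by
      push_cast; exact hS
    exact_mod_cast this
  · rw [Finset.sum_eq_zero, Finset.sum_eq_zero]
    · intro y hy
      simp only [Finset.mem_filter] at hy
      have : N y x z = 0 := by
        by_contra hne
        exact hc (by rw [hdeg_mul y x z (Nat.pos_of_ne_zero hne), hy.2, mul_comm])
      simp [this]
    · intro y hy
      simp only [Finset.mem_filter] at hy
      have : N x y z = 0 := by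
        by_contra hne
        exact hc (by rw [hdeg_mul x y z (Nat.pos_of_ne_zero hne), hy.2])
      simp [this]
end

section
/- Defect Hom-space dimension: let a fusion ring with dimension function d carry an E-grading deg for a finite abelian group E, together with weakly integral graded data (n_g, a_x), and set R_g := Σ_{y∈C_g} a_y·y. Then for all g, h ∈ E and all simples x, u, v with deg(x) = g and deg(u) = deg(v) = h: Σ_{e∈I} (Σ_{y : deg y = g} a_y·N^e_{uy})·N^e_{xv} = n_h·a_x·a_u·a_v. (This is the computation of dim Hom(u ⊗ R_g, x ⊗ v) used to evaluate the dimensions of defect Hilbert spaces.) -/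
open scoped BigOperators

/-- **Defect Hom-space dimension**: for a fusion ring `(I, one, star, N)` with
dimension function `d`, an `E`-grading `deg` for a finite abelian group `E`, and
weakly integral graded data `(n, a)`, setting `R_g = ∑_{y ∈ C_g} a_y·y`, one has
for all `g, h ∈ E` and all simples `x, u, v` with `deg x = g` and
`deg u = deg v = h`:
`∑_{e ∈ I} (∑_{y : deg y = g} a_y·N^e_{uy})·N^e_{xv} = n_h·a_x·a_u·a_v`.
This computes `dim Hom(u ⊗ R_g, x ⊗ v)`.  (Here `N u y e` denotes `N^e_{uy}`.) -/
theorem defect_hom_dimension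
    {I : Type*} [Fintype I] [DecidableEq I]
    {E : Type*} [CommGroup E] [Fintype E] [DecidableEq E]
    (one : I) (star : I → I) (N : I → I → I → ℕ)
    (h_star_one : star one = one)
    (h_assoc : ∀ x y z u : I,
      ∑ w : I, N x y w * N w z u = ∑ w : I, N y z w * N x w u)
    (h_one_left : ∀ x y : I, N one x y = if x = y then 1 else 0)
    (h_one_right : ∀ x y : I, N x one y = if x = y then 1 else 0)
    (h_frob₁ : ∀ x y z : I, N x y z = N (star x) z y)
    (h_frob₂ : ∀ x y z : I, N x y z = N z (star y) x)
    (d : I → ℝ)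
    (hd_pos : ∀ x, 0 < d x)
    (hd_star : ∀ x, d (star x) = d x)
    (hd_mul : ∀ x y, d x * d y = ∑ z : I, (N x y z : ℝ) * d z)
    (deg : I → E)
    (hdeg_one : deg one = 1)
    (hdeg_star : ∀ x, deg (star x) = (deg x)⁻¹)
    (hdeg_mul : ∀ x y z, 0 < N x y z → deg z = deg x * deg y)
    (n : E → ℕ) (a : I → ℕ)
    (hn_sqfree : ∀ g, Squarefree (n g)) (hn_pos : ∀ g, 0 < n g)
    (hn_one : n 1 = 1)
    (ha_pos : ∀ x, 0 < a x)
    (hd_eq : ∀ x, d x = (a x : ℝ) * Real.sqrt (n (deg x))) :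
    ∀ (g h : E) (x u v : I), deg x = g → deg u = h → deg v = h →
      ∑ e : I,
        (∑ y ∈ Finset.univ.filter (fun y => deg y = g), a y * N u y e) * N x v e
        = n h * a x * a u * a v := by
  -- star is an involution
  have hss : ∀ y : I, star (star y) = y := by
    intro y
    have h1 : ∀ z : I, N one (star (star y)) z = N one y z := by
      intro z
      rw [← h_frob₂ z (star y) one]
      exact (h_frob₂ one y z).symm
    have h2 := h1 y
    rw [h_one_left, h_one_left] at h2
    simp only [if_pos rfl] at h2
    by_contra hne
    rw [if_neg hne] at h2
    exact absurd h2 (by norm_num)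
  intro g h x u v hx hu hv
  set S : Finset I := Finset.univ.filter (fun y => deg y = g) with hS
  -- purely combinatorial rearrangement in ℕ
  have step : ∑ e : I, (∑ y ∈ S, a y * N u y e) * N x v e
      = ∑ w : I, N u w x * ∑ y ∈ S, a y * N w v y := by
    calc ∑ e : I, (∑ y ∈ S, a y * N u y e) * N x v e
        = ∑ e : I, ∑ y ∈ S, a y * (N u y e * N e (star v) x) := by
          refine Finset.sum_congr rfl fun e _ => ?_
          rw [Finset.sum_mul]
          refine Finset.sum_congr rfl fun y _ => ?_
          rw [← h_frob₂ x v e]; ring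
      _ = ∑ y ∈ S, ∑ e : I, a y * (N u y e * N e (star v) x) := Finset.sum_comm
      _ = ∑ y ∈ S, a y * ∑ e : I, N u y e * N e (star v) x := by
          refine Finset.sum_congr rfl fun y _ => ?_
          rw [Finset.mul_sum]
      _ = ∑ y ∈ S, a y * ∑ w : I, N y (star v) w * N u w x := by
          refine Finset.sum_congr rfl fun y _ => ?_
          rw [h_assoc u y (star v) x]
      _ = ∑ y ∈ S, ∑ w : I, N u w x * (a y * N w v y) := by
          refine Finset.sum_congr rfl fun y _ => ?_
          rw [Finset.mul_sum]
          refine Finset.sum_congr rfl fun w _ => ?_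
          rw [h_frob₂ y (star v) w, hss v]; ring
      _ = ∑ w : I, ∑ y ∈ S, N u w x * (a y * N w v y) := Finset.sum_comm
      _ = ∑ w : I, N u w x * ∑ y ∈ S, a y * N w v y := by
          refine Finset.sum_congr rfl fun w _ => ?_
          rw [Finset.mul_sum]
  rw [step]
  -- now pass to ℝ
  have hsg : (0 : ℝ) < Real.sqrt (n g) := Real.sqrt_pos.mpr (by exact_mod_cast hn_pos g)
  have key : (↑(∑ w : I, N u w x * ∑ y ∈ S, a y * N w v y) : ℝ)
      = (↑(n h * a x * a u * a v) : ℝ) := by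
    push_cast
    apply mul_right_cancel₀ hsg.ne'
    -- Lemma A, in product form
    have hA : ∀ w : I, (N u w x : ℝ) * ((∑ y ∈ S, (a y : ℝ) * N w v y) * Real.sqrt (n g))
        = (N u w x : ℝ) * (d w * d v) := by
      intro w
      rcases Nat.eq_zero_or_pos (N u w x) with h0 | hpos
      · simp [h0]
      · congr 1
        have hw : deg w * deg v = g := by
          have hd := hdeg_mul u w x hpos
          rw [hx, hu] at hd
          rw [hv, hd]; exact mul_comm _ _
        have termwise : ∀ z : I, (N w v z : ℝ) * d z
            = (if deg z = g then (a z : ℝ) * N w v z else 0) * Real.sqrt (n g) := by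
          intro z
          rcases Nat.eq_zero_or_pos (N w v z) with hz0 | hzpos
          · rw [hz0]; split <;> simp
          · have hdz : deg z = g := by rw [hdeg_mul w v z hzpos, hw]
            rw [if_pos hdz, hd_eq z, hdz]; push_cast; ring
        calc (∑ y ∈ S, (a y : ℝ) * N w v y) * Real.sqrt (n g)
            = ∑ y : I, (if deg y = g then (a y : ℝ) * N w v y else 0) * Real.sqrt (n g) := by
              rw [← Finset.sum_mul, hS, Finset.sum_filter]
          _ = ∑ z : I, (N w v z : ℝ) * d z := by
              exact (Finset.sum_congr rfl fun z _ => (termwise z).symm)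
          _ = d w * d v := (hd_mul w v).symm
    -- Lemma B
    have hB : ∑ w : I, (N u w x : ℝ) * d w = d u * d x := by
      have : ∀ w : I, (N u w x : ℝ) = N (star u) x w := fun w => by
        exact_mod_cast h_frob₁ u w x
      calc ∑ w : I, (N u w x : ℝ) * d w
          = ∑ w : I, (N (star u) x w : ℝ) * d w := by
            exact Finset.sum_congr rfl fun w _ => by rw [this w]
        _ = d (star u) * d x := (hd_mul (star u) x).symm
        _ = d u * d x := by rw [hd_star]
    calc (∑ w : I, (N u w x : ℝ) * ∑ y ∈ S, (a y : ℝ) * N w v y) * Real.sqrt (n g)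
        = ∑ w : I, (N u w x : ℝ) * ((∑ y ∈ S, (a y : ℝ) * N w v y) * Real.sqrt (n g)) := by
          rw [Finset.sum_mul]; exact Finset.sum_congr rfl fun w _ => by ring
      _ = ∑ w : I, (N u w x : ℝ) * (d w * d v) := Finset.sum_congr rfl fun w _ => hA w
      _ = d v * ∑ w : I, (N u w x : ℝ) * d w := by
          rw [Finset.mul_sum]; exact Finset.sum_congr rfl fun w _ => by ring
      _ = d v * (d u * d x) := by rw [hB]
      _ = (n h : ℝ) * a x * a u * a v * Real.sqrt (n g) := by
          rw [hd_eq v, hd_eq u, hd_eq x, hv, hu, hx]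
          have : Real.sqrt (n h) * Real.sqrt (n h) = (n h : ℝ) :=
            Real.mul_self_sqrt (Nat.cast_nonneg _)
          linear_combination ((a v : ℝ) * a u * a x * Real.sqrt (n g)) * this
  exact_mod_cast key
end

section
/- Graded components of a faithfully graded fusion ring have equal total dimension: let a fusion ring with dimension function d carry a faithful E-grading deg for a finite group E. Then for every g ∈ E, Σ_{x : deg x = g} d(x)² = Σ_{x : deg x = 1} d(x)². -/
open scoped BigOperators

/-- **Graded components of a faithfully graded fusion ring have equal total
dimension**: for a fusion ring `(I, one, star, N)` with dimension function `d`
and a faithful `E`-grading `deg` for a finite group `E`, one has for every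
`g ∈ E`: `∑_{x : deg x = g} d(x)² = ∑_{x : deg x = 1} d(x)²`. -/
theorem graded_components_equal_dimension
    {I : Type*} [Fintype I] [DecidableEq I]
    {E : Type*} [Group E] [Fintype E] [DecidableEq E]
    (one : I) (star : I → I) (N : I → I → I → ℕ)
    (h_star_one : star one = one)
    (h_assoc : ∀ x y z u : I,
      ∑ w : I, N x y w * N w z u = ∑ w : I, N y z w * N x w u)
    (h_one_left : ∀ x y : I, N one x y = if x = y then 1 else 0)
    (h_one_right : ∀ x y : I, N x one y = if x = y then 1 else 0)
    (h_frob₁ : ∀ x y z : I, N x y z = N (star x) z y)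
    (h_frob₂ : ∀ x y z : I, N x y z = N z (star y) x)
    (d : I → ℝ)
    (hd_pos : ∀ x, 0 < d x)
    (hd_star : ∀ x, d (star x) = d x)
    (hd_mul : ∀ x y, d x * d y = ∑ z : I, (N x y z : ℝ) * d z)
    (deg : I → E)
    (hdeg_one : deg one = 1)
    (hdeg_star : ∀ x, deg (star x) = (deg x)⁻¹)
    (hdeg_mul : ∀ x y z, 0 < N x y z → deg z = deg x * deg y)
    (hfaithful : ∀ g : E, ∃ x : I, deg x = g) :
    ∀ g : E,
      ∑ x ∈ Finset.univ.filter (fun x => deg x = g), d x ^ 2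
        = ∑ x ∈ Finset.univ.filter (fun x => deg x = 1), d x ^ 2 := by
  have key : ∀ y z : I, ∑ x : I, (N x y z : ℝ) * d x = d y * d z := by
    intro y z
    have h := hd_mul z (star y)
    rw [hd_star y] at h
    rw [mul_comm (d y) (d z), h]
    exact Finset.sum_congr rfl fun x _ => by rw [h_frob₂ x y z]
  intro g
  obtain ⟨a, ha⟩ := hfaithful g
  have hzero : ∀ x z : I, deg z ≠ deg x * g → (N x a z : ℝ) = 0 := by
    intro x z h
    by_contra hne
    have hp : 0 < N x a z := Nat.pos_of_ne_zero (Nat.cast_ne_zero.mp hne)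
    exact h (by rw [hdeg_mul x a z hp, ha])
  have T1 : (∑ x ∈ Finset.univ.filter (fun x => deg x = 1), ∑ z : I, d x * (N x a z : ℝ) * d z)
      = d a * ∑ x ∈ Finset.univ.filter (fun x => deg x = 1), d x ^ 2 := by
    rw [Finset.mul_sum]
    refine Finset.sum_congr rfl fun x _ => ?_
    have h1 : ∑ z : I, d x * (N x a z : ℝ) * d z = d x * ∑ z : I, (N x a z : ℝ) * d z := by
      rw [Finset.mul_sum]; exact Finset.sum_congr rfl fun z _ => by ring
    rw [h1, ← hd_mul x a]
    ring
  have T2 : (∑ x ∈ Finset.univ.filter (fun x => deg x = 1), ∑ z : I, d x * (N x a z : ℝ) * d z)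
      = d a * ∑ z ∈ Finset.univ.filter (fun z => deg z = g), d z ^ 2 := by
    rw [Finset.sum_comm]
    have step : ∀ z : I,
        (∑ x ∈ Finset.univ.filter (fun x => deg x = 1), d x * (N x a z : ℝ) * d z)
        = if deg z = g then d a * d z ^ 2 else 0 := by
      intro z
      by_cases hz : deg z = g
      · simp only [hz, if_true]
        have hfull : (∑ x ∈ Finset.univ.filter (fun x => deg x = 1), d x * (N x a z : ℝ) * d z)
            = ∑ x : I, d x * (N x a z : ℝ) * d z := by
          apply Finset.sum_subset (Finset.subset_univ _)
          intro x _ hx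
          simp only [Finset.mem_filter, Finset.mem_univ, true_and] at hx
          have hN : (N x a z : ℝ) = 0 := by
            apply hzero x z
            rw [hz]
            intro hc
            exact hx (mul_right_cancel (b := g) (show deg x * g = 1 * g by rw [one_mul, ← hc]))
          rw [hN]; ring
        have h2 : (∑ x : I, d x * (N x a z : ℝ) * d z)
            = (∑ x : I, (N x a z : ℝ) * d x) * d z := by
          rw [Finset.sum_mul]; exact Finset.sum_congr rfl fun x _ => by ring
        rw [hfull, h2, key a z]; ring
      · simp only [hz, if_false]
        apply Finset.sum_eq_zero
        intro x hx
        simp only [Finset.mem_filter, Finset.mem_univ, true_and] at hx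
        have hN : (N x a z : ℝ) = 0 := by
          apply hzero x z
          rw [hx, one_mul]; exact hz
        rw [hN]; ring
    rw [Finset.sum_congr rfl fun z _ => step z, Finset.sum_ite, Finset.sum_const_zero,
      add_zero, Finset.mul_sum]
  have := T1.symm.trans T2
  exact (mul_left_cancel₀ (ne_of_gt (hd_pos a)) this).symm
end

section
/- Integrality of q(g,h): let m, n, p be squarefree positive integers such that the rational number m·n/p is the square of a rational number. Then p·gcd(m,n)² = m·n; in particular m·n/p is a perfect square and √(m·n/p) = gcd(m,n) is a positive integer. -/
/-- Two squarefree positive naturals whose product is a square are equal. -/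
lemma squarefree_eq_of_isSquare_mul {a b : ℕ} (ha0 : a ≠ 0) (hb0 : b ≠ 0)
    (ha : Squarefree a) (hb : Squarefree b) (h : IsSquare (a * b)) : a = b := by
  obtain ⟨k, hk⟩ := h
  have hk0 : k ≠ 0 := by
    rintro rfl
    simp only [mul_zero] at hk
    exact (mul_ne_zero ha0 hb0) hk
  apply Nat.eq_of_factorization_eq ha0 hb0
  intro q
  have hfa := (Nat.squarefree_iff_factorization_le_one ha0).mp ha q
  have hfb := (Nat.squarefree_iff_factorization_le_one hb0).mp hb q
  have hfac := congrArg Nat.factorization hk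
  rw [Nat.factorization_mul ha0 hb0, Nat.factorization_mul hk0 hk0] at hfac
  have := DFunLike.congr_fun hfac q
  simp only [Finsupp.add_apply] at this
  omega

/-- **Integrality of `q(g,h)`**: let `m, n, p` be squarefree positive integers
such that the rational number `m·n/p` is the square of a rational number.  Then
`p·gcd(m,n)² = m·n`; in particular `m·n/p` is a perfect square (namely
`gcd(m,n)²`) and `√(m·n/p) = gcd(m,n)` is a positive integer. -/
theorem squarefree_ratio_square
    (m n p : ℕ) (hm0 : 0 < m) (hn0 : 0 < n) (hp0 : 0 < p)
    (hm : Squarefree m) (hn : Squarefree n) (hp : Squarefree p)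
    (hsq : ∃ q : ℚ, ((m : ℚ) * n) / p = q ^ 2) :
    p * Nat.gcd m n ^ 2 = m * n ∧
    ((m : ℚ) * n) / p = (Nat.gcd m n : ℚ) ^ 2 ∧
    Real.sqrt (((m : ℝ) * n) / p) = (Nat.gcd m n : ℝ) ∧
    0 < Nat.gcd m n := by
  obtain ⟨q, hq⟩ := hsq
  set g := Nat.gcd m n with hgdef
  have hgm : g ∣ m := Nat.gcd_dvd_left m n
  have hgn : g ∣ n := Nat.gcd_dvd_right m n
  have hg0 : 0 < g := Nat.gcd_pos_of_pos_left n hm0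
  set m' := m / g with hm'def
  set n' := n / g with hn'def
  have hm' : m = g * m' := (Nat.mul_div_cancel' hgm).symm
  have hn' : n = g * n' := (Nat.mul_div_cancel' hgn).symm
  have hcop : Nat.Coprime m' n' := Nat.coprime_div_gcd_div_gcd hg0
  have hm'0 : m' ≠ 0 := by rintro h; rw [h, mul_zero] at hm'; omega
  have hn'0 : n' ≠ 0 := by rintro h; rw [h, mul_zero] at hn'; omega
  have hsqm' : Squarefree m' := hm.squarefree_of_dvd ⟨g, by rw [hm']; ring⟩
  have hsqn' : Squarefree n' := hn.squarefree_of_dvd ⟨g, by rw [hn']; ring⟩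
  have ha : Squarefree (m' * n') := (Nat.squarefree_mul hcop).mpr ⟨hsqm', hsqn'⟩
  -- m*n*p is a perfect square
  have hp0' : (p : ℚ) ≠ 0 := by positivity
  have hmn : (m : ℚ) * n = q ^ 2 * p := by
    field_simp at hq; linarith [hq]
  have hsqnat : IsSquare (m * n * p) := by
    rw [← Rat.isSquare_natCast_iff]
    refine ⟨q * p, ?_⟩
    push_cast
    rw [hmn]; ring
  obtain ⟨k, hk⟩ := hsqnat
  have hk' : g ^ 2 * (m' * n' * p) = k * k := by
    rw [← hk, hm', hn']; ring
  have hgk : g ∣ k := by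
    have : g ^ 2 ∣ k ^ 2 := ⟨m' * n' * p, by rw [sq, ← hk']⟩
    exact (Nat.pow_dvd_pow_iff two_ne_zero).mp this
  obtain ⟨t, rfl⟩ := hgk
  have hmt : m' * n' * p = t * t := by
    have : g ^ 2 * (m' * n' * p) = g ^ 2 * (t * t) := by rw [hk']; ring
    exact Nat.eq_of_mul_eq_mul_left (by positivity) this
  have hpeq : m' * n' = p :=
    squarefree_eq_of_isSquare_mul (mul_ne_zero hm'0 hn'0) (by omega) ha hp ⟨t, hmt⟩
  have key : p * g ^ 2 = m * n := by
    rw [← hpeq, hm', hn']; ring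
  refine ⟨key, ?_, ?_, hg0⟩
  · have : (m : ℚ) * n = p * g ^ 2 := by exact_mod_cast key.symm
    rw [this]; field_simp
  · have : (m : ℝ) * n = p * g ^ 2 := by exact_mod_cast key.symm
    rw [this]
    rw [mul_comm, mul_div_assoc, div_self (by positivity : (p:ℝ) ≠ 0), mul_one]
    exact Real.sqrt_sq (by positivity)
end
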